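/- Let f : ℝ³ → ℝ be differentiable and nowhere zero, V : ℝ² → ℝ differentiable with V > 0, and l(q,p) = (∂f/∂p₁)(p)·q₂ − (∂f/∂p₂)(p)·q₁. Let Ω be the 6×6 matrix Ω(q,p) = (1/f(p)) · [[0,0,0,−1,0,0],[0,0,0,0,−1,0],[0,0,0,0,0,−1],[1,0,0,0,0,0],[0,1,0,0,0,l/f],[0,0,1,0,−l/f,0]] on ℝ⁶ with coordinates (q₀,q₁,q₂,p₀,p₁,p₂), and let ι : ℝ⁴ → ℝ⁶ be the embedding ι(q₁,q₂,p₁,p₂) = (0, q₁, q₂, √(p₁²+p₂²+V(q₁,q₂)), p₁, p₂) of the submanifold N = {H = 0, p₀ > 0, q₀ = 0}. Then for every x ∈ ℝ⁴ and all u, v ∈ ℝ⁴ (components ordered (q₁,q₂,p₁,p₂)): (Dι(x)·u)ᵀ · Ω(ι(x)) · (Dι(x)·v) = uᵀ · Ω_N(x) · v, where Ω_N(x) = (1/f) · [[0,0,−1,0],[0,0,0,−1],[1,0,0,l/f],[0,1,−l/f,0]] with f and l evaluated at ι(x). That is, the symplectic form induced on the reduced phase space N is ω|_N = (1/f)(dp₁∧dq₁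 + dp₂∧dq₂ + (l/f)·dp₁∧dp₂), of the same functional form as the original deformed symplectic form. -/

import Mathlib

open Matrix

/-- The closure-condition function `l(q,p) = (∂f/∂p₁)(p)·q₂ − (∂f/∂p₂)(p)·q₁` on the phase
space `ℝ⁶` with coordinates `(q₀,q₁,q₂,p₀,p₁,p₂)`. -/
noncomputable def lfun (f : (Fin 3 → ℝ) → ℝ) (x : Fin 6 → ℝ) : ℝ :=
  fderiv ℝ f ![x 3, x 4, x 5] (Pi.single 1 1) * x 2 -
    fderiv ℝ f ![x 3, x 4, x 5] (Pi.single 2 1) * x 1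

/-- Matrix of the deformed symplectic form of the GUP Bianchi model in Misner variables. -/
noncomputable def OmegaB (f : (Fin 3 → ℝ) → ℝ) (x : Fin 6 → ℝ) : Matrix (Fin 6) (Fin 6) ℝ :=
  (f ![x 3, x 4, x 5])⁻¹ •
    !![0, 0, 0, -1, 0, 0;
       0, 0, 0, 0, -1, 0;
       0, 0, 0, 0, 0, -1;
       1, 0, 0, 0, 0, 0;
       0, 1, 0, 0, 0, lfun f x / f ![x 3, x 4, x 5];
       0, 0, 1, 0, -(lfun f x / f ![x 3, x 4, x 5]), 0]

/-- The embedding `ι(q₁,q₂,p₁,p₂) = (0, q₁, q₂, √(p₁²+p₂²+V(q₁,q₂)), p₁, p₂)` of the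
submanifold `N = {H = 0, p₀ > 0, q₀ = 0}`. -/
noncomputable def iota4 (V : (Fin 2 → ℝ) → ℝ) (y : Fin 4 → ℝ) : Fin 6 → ℝ :=
  ![0, y 0, y 1,
    Real.sqrt ((y 2) ^ 2 + (y 3) ^ 2 + V ![y 0, y 1]),
    y 2, y 3]

/-- Matrix of the symplectic form induced on the reduced phase space `N`, with `f` and `l`
evaluated at `ι(x)`: `ω|_N = (1/f)(dp₁∧dq₁ + dp₂∧dq₂ + (l/f)·dp₁∧dp₂)`. -/
noncomputable def OmegaN18 (f : (Fin 3 → ℝ) → ℝ) (V : (Fin 2 → ℝ) → ℝ) (y : Fin 4 → ℝ) :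
    Matrix (Fin 4) (Fin 4) ℝ :=
  let x := iota4 V y
  let fp := f ![x 3, x 4, x 5]
  let l := lfun f x
  fp⁻¹ • !![0, 0, -1, 0;
            0, 0, 0, -1;
            1, 0, 0, l / fp;
            0, 1, -(l / fp), 0]

/-! The clock variable `q₀` commutes with everything, so in `Ω` the `p₀` row and column meet
only the `q₀` column and row. Tangent vectors to `N` have vanishing `q₀`-component, since
`q₀ = 0` on `N`; hence the `p₀`-component of `Dι(x)·u`, the only one involving the derivative
of `√(p₁² + p₂² + V)`, drops out of the pullback, and what remains is `Ω` with the `q₀` and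
`p₀` rows and columns deleted. -/

lemma differentiableAt_iota4 {V : (Fin 2 → ℝ) → ℝ} {x : Fin 4 → ℝ}
    (hV : DifferentiableAt ℝ V ![x 0, x 1]) (hVpos : 0 < V ![x 0, x 1]) :
    DifferentiableAt ℝ (iota4 V) x := by
  have hq : DifferentiableAt ℝ (fun y : Fin 4 → ℝ => ![y 0, y 1]) x :=
    differentiableAt_pi.2 fun i => by
      fin_cases i <;> simp only [Fin.zero_eta, Fin.mk_one, cons_val_zero, cons_val_one,
        cons_val_fin_one] <;> fun_prop
  have hp₀ : DifferentiableAt ℝ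
      (fun y : Fin 4 → ℝ => √((y 2) ^ 2 + (y 3) ^ 2 + V ![y 0, y 1])) x :=
    (by fun_prop : DifferentiableAt ℝ
      (fun y : Fin 4 → ℝ => (y 2) ^ 2 + (y 3) ^ 2 + V ![y 0, y 1]) x).sqrt (by positivity)
  refine differentiableAt_pi.2 fun i => ?_
  fin_cases i <;> simp only [iota4, Fin.zero_eta, Fin.mk_one, Fin.reduceFinMk, cons_val_zero,
    cons_val_one, cons_val] <;> fun_prop

lemma fderiv_iota4_apply {V : (Fin 2 → ℝ) → ℝ} {x : Fin 4 → ℝ}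
    (h : DifferentiableAt ℝ (iota4 V) x) (w : Fin 4 → ℝ) :
    fderiv ℝ (iota4 V) x w = ![0, w 0, w 1, fderiv ℝ (fun y => iota4 V y 3) x w, w 2, w 3] := by
  funext i
  change (ContinuousLinearMap.proj i).comp (fderiv ℝ (iota4 V) x) w = _
  rw [← fderiv_apply h]
  fin_cases i <;> simp [iota4, (hasFDerivAt_apply _ _).fderiv]

lemma dotProduct_OmegaB_mulVec_of_q₀_eq_zero (f : (Fin 3 → ℝ) → ℝ) (y : Fin 6 → ℝ)
    (a b : ℝ) (u v : Fin 4 → ℝ) :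
    ![0, u 0, u 1, a, u 2, u 3] ⬝ᵥ OmegaB f y *ᵥ ![0, v 0, v 1, b, v 2, v 3] =
      u ⬝ᵥ ((f ![y 3, y 4, y 5])⁻¹ •
        !![0, 0, -1, 0;
           0, 0, 0, -1;
           1, 0, 0, lfun f y / f ![y 3, y 4, y 5];
           0, 1, -(lfun f y / f ![y 3, y 4, y 5]), 0]) *ᵥ v := by
  simp [OmegaB, mulVec, dotProduct, Fin.sum_univ_succ]

theorem stmt_18_general (f : (Fin 3 → ℝ) → ℝ)
    (V : (Fin 2 → ℝ) → ℝ) (hV : Differentiable ℝ V) (hVpos : ∀ y, 0 < V y) :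
    ∀ x u v : Fin 4 → ℝ,
      (fderiv ℝ (iota4 V) x u) ⬝ᵥ (OmegaB f (iota4 V x)).mulVec (fderiv ℝ (iota4 V) x v) =
        u ⬝ᵥ (OmegaN18 f V x).mulVec v := by
  intro x u v
  have hι : DifferentiableAt ℝ (iota4 V) x := differentiableAt_iota4 (hV _) (hVpos _)
  rw [fderiv_iota4_apply hι u, fderiv_iota4_apply hι v]
  exact dotProduct_OmegaB_mulVec_of_q₀_eq_zero f (iota4 V x) _ _ u v

/-- The pullback of the deformed symplectic form of the GUP Bianchi model along the embedding
`ι` of the reduced phase space `N = {H = 0, p₀ > 0, q₀ = 0}` equals the reduced matrix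
`Ω_N`: `(Dι(x)·u)ᵀ·Ω(ι(x))·(Dι(x)·v) = uᵀ·Ω_N(x)·v` — the induced symplectic form has the
same functional form as the original deformed one. -/
theorem stmt_18 (f : (Fin 3 → ℝ) → ℝ) (hf : Differentiable ℝ f) (hf0 : ∀ p, f p ≠ 0)
    (V : (Fin 2 → ℝ) → ℝ) (hV : Differentiable ℝ V) (hVpos : ∀ y, 0 < V y) :
    ∀ x u v : Fin 4 → ℝ,
      (fderiv ℝ (iota4 V) x u) ⬝ᵥ (OmegaB f (iota4 V x)).mulVec (fderiv ℝ (iota4 V) x v) =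
        u ⬝ᵥ (OmegaN18 f V x).mulVec v :=
  stmt_18_general f V hV hVpos
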